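/- Let ψ_k be the triangular density of the difference of two independent Uniform[−1/k,1/k] variables (supported in [−2/k,2/k], ∫ψ_k = 1, symmetric). For any integer m ≥ 1, R > 2 m and k ≥ 3, | ∫ ψ_k(t) log|m + t| (1 − |m + t|/R) dt − log(m)(1 − m/R) | ≤ C k^{−2} ( m^{−2} + (m R)^{−1} ) for a universal constant C. -/

import Mathlib

open MeasureTheory

/-- The triangular "hat" density of the difference of two independent
`Uniform[-1/k, 1/k]` random variables. -/
noncomputable def hatDensity (k : ℕ) (t : ℝ) : ℝ :=
  max ((k : ℝ) / 2 * (1 - (k : ℝ) * |t| / 2)) 0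

/-!
`ψ_k` is an even probability density supported in `[-2/k, 2/k]`, so integrating
`h(m + t)` against it kills the constant and linear Taylor terms of
`h(y) = log y * (1 - y / R)` at `y = m`. The remainder is at most `sup |h''| * (2/k)^2`, and on
`[m/3, R] ⊇ [m - 2/k, m + 2/k]` one has `|h''(y)| ≤ y⁻² + 2 (y R)⁻¹ ≤ 9 (m⁻² + (m R)⁻¹)`.
-/

open Set Metric Real

section CenteredDensity

variable {ψ F : ℝ → ℝ} {c : ℝ}

lemma integrable_mul_of_continuousOn_Icc (hψ : Continuous ψ)
    (hψ_supp : ∀ t ∉ Icc (-c) c, ψ t = 0) (hF : ContinuousOn F (Icc (-c) c)) :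
    Integrable fun t => ψ t * F t :=
  ((hψ.continuousOn.mul hF).integrableOn_compact isCompact_Icc)
    |>.integrable_of_forall_notMem_eq_zero fun t ht => by rw [Pi.mul_apply, hψ_supp t ht, zero_mul]

theorem abs_integral_mul_sub_le {a B : ℝ} (hψ : Continuous ψ) (hψ_nonneg : ∀ t, 0 ≤ ψ t)
    (hψ_supp : ∀ t ∉ Icc (-c) c, ψ t = 0) (hψ_one : ∫ t, ψ t = 1)
    (hψ_mean : ∫ t, ψ t * t = 0) (hF : ContinuousOn F (Icc (-c) c))
    (hB : ∀ t ∈ Icc (-c) c, |F t - F 0 - a * t| ≤ B) :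
    |(∫ t, ψ t * F t) - F 0| ≤ B := by
  have hint : ∀ {G : ℝ → ℝ}, ContinuousOn G (Icc (-c) c) → Integrable fun t => ψ t * G t :=
    integrable_mul_of_continuousOn_Icc hψ hψ_supp
  have hψ_int : Integrable ψ := by simpa using hint (G := fun _ => 1) continuousOn_const
  have hψ_id : Integrable fun t => ψ t * t := hint continuousOn_id
  have hrem : (∫ t, ψ t * F t) - F 0 = ∫ t, ψ t * (F t - F 0 - a * t) := by
    have hsplit : (fun t => ψ t * (F t - F 0 - a * t))
        = fun t => ψ t * F t - ψ t * F 0 - a * (ψ t * t) := by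
      funext t; ring
    rw [hsplit, integral_sub ?_ (hψ_id.const_mul a),
      integral_sub (hint hF) (hψ_int.mul_const _), integral_mul_const, integral_const_mul,
      hψ_one, hψ_mean]
    · ring
    · exact (hint hF).sub (hψ_int.mul_const _)
  have hpt : ∀ t, |ψ t * (F t - F 0 - a * t)| ≤ ψ t * B := by
    intro t
    rw [abs_mul, abs_of_nonneg (hψ_nonneg t)]
    by_cases ht : t ∈ Icc (-c) c
    · exact mul_le_mul_of_nonneg_left (hB t ht) (hψ_nonneg t)
    · simp [hψ_supp t ht]
  calc |(∫ t, ψ t * F t) - F 0| = |∫ t, ψ t * (F t - F 0 - a * t)| := by rw [hrem]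
    _ ≤ ∫ t, |ψ t * (F t - F 0 - a * t)| := abs_integral_le_integral_abs
    _ ≤ ∫ t, ψ t * B :=
      integral_mono (hint (hF.sub continuousOn_const |>.sub (continuousOn_id.const_smul a))).abs
        (hψ_int.mul_const B) hpt
    _ = B := by rw [integral_mul_const, hψ_one, one_mul]

end CenteredDensity

theorem abs_sub_sub_mul_le_of_hasDerivAt {f f' f'' : ℝ → ℝ} {x₀ r M : ℝ}
    (hf : ∀ x ∈ closedBall x₀ r, HasDerivAt f (f' x) x)
    (hf' : ∀ x ∈ closedBall x₀ r, HasDerivAt f' (f'' x) x)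
    (hf'' : ∀ x ∈ closedBall x₀ r, |f'' x| ≤ M) {x : ℝ} (hx : x ∈ closedBall x₀ r) :
    |f x - f x₀ - f' x₀ * (x - x₀)| ≤ M * r ^ 2 := by
  have hr : 0 ≤ r := dist_nonneg.trans hx
  have hx₀ : x₀ ∈ closedBall x₀ r := mem_closedBall_self hr
  have hM : 0 ≤ M := (abs_nonneg _).trans (hf'' x₀ hx₀)
  have hslope : ∀ y ∈ closedBall x₀ r, ‖f' y - f' x₀‖ ≤ M * r := by
    intro y hy
    have := (convex_closedBall x₀ r).norm_image_sub_le_of_norm_hasDerivWithin_le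
      (fun z hz => (hf' z hz).hasDerivWithinAt) (fun z hz => hf'' z hz) hx₀ hy
    exact this.trans (mul_le_mul_of_nonneg_left (mem_closedBall.mp hy) hM)
  have hg : ∀ y ∈ closedBall x₀ r,
      HasDerivWithinAt (fun z => f z - f' x₀ * z) (f' y - f' x₀) (closedBall x₀ r) y :=
    fun y hy => ((hf y hy).sub ((hasDerivAt_id y).const_mul (f' x₀)) |>.congr_deriv
      (by simp)).hasDerivWithinAt
  calc |f x - f x₀ - f' x₀ * (x - x₀)| = ‖(f x - f' x₀ * x) - (f x₀ - f' x₀ * x₀)‖ := by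
        rw [Real.norm_eq_abs]; ring_nf
    _ ≤ M * r * ‖x - x₀‖ :=
      (convex_closedBall x₀ r).norm_image_sub_le_of_norm_hasDerivWithin_le hg hslope hx₀ hx
    _ ≤ M * r * r := by gcongr; exact mem_closedBall.mp hx
    _ = M * r ^ 2 := by ring

section LogMulOneSubDiv

variable {R y : ℝ}

lemma hasDerivAt_log_mul_one_sub_div (hy : y ≠ 0) :
    HasDerivAt (fun y => log y * (1 - y / R)) (y⁻¹ * (1 - y / R) - log y / R) y := by
  have := (hasDerivAt_log hy).mul (((hasDerivAt_id y).div_const R).const_sub 1)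
  exact this.congr_deriv (by simp only [id]; ring)

lemma hasDerivAt_inv_mul_one_sub_div_sub_log_div (hy : y ≠ 0) :
    HasDerivAt (fun y => y⁻¹ * (1 - y / R) - log y / R)
      (-(y ^ 2)⁻¹ * (1 - y / R) - 2 * (y * R)⁻¹) y := by
  have := ((hasDerivAt_inv hy).mul (((hasDerivAt_id y).div_const R).const_sub 1)).sub
    ((hasDerivAt_log hy).div_const R)
  exact this.congr_deriv (by simp only [id]; field_simp; ring)

lemma abs_neg_inv_sq_mul_one_sub_div_sub_le {a : ℝ} (ha : 0 < a) (hay : a ≤ y) (hyR : y ≤ R) :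
    |-(y ^ 2)⁻¹ * (1 - y / R) - 2 * (y * R)⁻¹| ≤ (a ^ 2)⁻¹ + 2 * (a * R)⁻¹ := by
  have hy : 0 < y := ha.trans_le hay
  have hR : 0 < R := hy.trans_le hyR
  have h1 : 0 ≤ 1 - y / R := sub_nonneg.mpr ((div_le_one hR).mpr hyR)
  have h2 : 1 - y / R ≤ 1 := sub_le_self _ (by positivity)
  have hnonpos : -(y ^ 2)⁻¹ * (1 - y / R) - 2 * (y * R)⁻¹ ≤ 0 := by
    have : 0 ≤ (y ^ 2)⁻¹ * (1 - y / R) := by positivity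
    have : 0 ≤ (y * R)⁻¹ := by positivity
    linarith
  calc |-(y ^ 2)⁻¹ * (1 - y / R) - 2 * (y * R)⁻¹|
      = (y ^ 2)⁻¹ * (1 - y / R) + 2 * (y * R)⁻¹ := by rw [abs_of_nonpos hnonpos]; ring
    _ ≤ (y ^ 2)⁻¹ * 1 + 2 * (y * R)⁻¹ := by gcongr
    _ ≤ (a ^ 2)⁻¹ + 2 * (a * R)⁻¹ := by rw [mul_one]; gcongr

lemma abs_log_mul_one_sub_div_sub_le {a x₀ r : ℝ} (ha : 0 < a)
    (hball : ∀ y ∈ closedBall x₀ r, a ≤ y ∧ y ≤ R) {y : ℝ} (hy : y ∈ closedBall x₀ r) :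
    |log y * (1 - y / R) - log x₀ * (1 - x₀ / R) - (x₀⁻¹ * (1 - x₀ / R) - log x₀ / R) * (y - x₀)|
      ≤ ((a ^ 2)⁻¹ + 2 * (a * R)⁻¹) * r ^ 2 :=
  abs_sub_sub_mul_le_of_hasDerivAt (f := fun y => log y * (1 - y / R))
    (fun z hz => hasDerivAt_log_mul_one_sub_div (ha.trans_le (hball z hz).1).ne')
    (fun z hz => hasDerivAt_inv_mul_one_sub_div_sub_log_div (ha.trans_le (hball z hz).1).ne')
    (fun z hz => abs_neg_inv_sq_mul_one_sub_div_sub_le ha (hball z hz).1 (hball z hz).2) hy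

end LogMulOneSubDiv

section HatDensity

variable {k : ℕ}

lemma hatDensity_nonneg (k : ℕ) (t : ℝ) : 0 ≤ hatDensity k t := le_max_right _ _

lemma continuous_hatDensity (k : ℕ) : Continuous (hatDensity k) := by
  unfold hatDensity; fun_prop

lemma hatDensity_neg (k : ℕ) (t : ℝ) : hatDensity k (-t) = hatDensity k t := by
  simp only [hatDensity, abs_neg]

lemma hatDensity_of_mem_Icc (hk : 1 ≤ k) {t : ℝ} (ht : t ∈ Icc (-(2 / k : ℝ)) (2 / k)) :
    hatDensity k t = k / 2 * (1 - k * |t| / 2) := by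
  have hk0 : (0 : ℝ) < k := by exact_mod_cast hk
  have : (k : ℝ) * |t| ≤ 2 := by
    rw [← le_div_iff₀' hk0]; exact abs_le.mpr ht
  exact max_eq_left (by nlinarith)

lemma hatDensity_of_notMem_Icc (hk : 1 ≤ k) {t : ℝ} (ht : t ∉ Icc (-(2 / k : ℝ)) (2 / k)) :
    hatDensity k t = 0 := by
  have hk0 : (0 : ℝ) < k := by exact_mod_cast hk
  have : 2 ≤ (k : ℝ) * |t| := by
    rw [← div_le_iff₀' hk0]; by_contra h; exact ht (abs_le.mp (not_le.mp h).le)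
  exact max_eq_right (by nlinarith)

lemma integral_hatDensity_mul_id (k : ℕ) : ∫ t, hatDensity k t * t = 0 := by
  have h := integral_neg_eq_self (fun t => hatDensity k t * t) volume
  simp only [hatDensity_neg, mul_neg, integral_neg] at h
  linarith

lemma integral_hatDensity (hk : 1 ≤ k) : ∫ t, hatDensity k t = 1 := by
  have hk0 : (0 : ℝ) < k := by exact_mod_cast hk
  set c : ℝ := 2 / k
  have hc : 0 < c := by positivity
  have hcont := continuous_hatDensity k
  have hhalf : ∫ t in 0..c, hatDensity k t = 1 / 2 := by
    rw [intervalIntegral.integral_congr (g := fun t => k / 2 - k ^ 2 / 4 * t)]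
    · rw [intervalIntegral.integral_sub intervalIntegrable_const
        (intervalIntegral.intervalIntegrable_id.const_mul _), intervalIntegral.integral_const,
        intervalIntegral.integral_const_mul, integral_id]
      simp only [c, smul_eq_mul]
      field_simp
      ring
    · intro t ht
      rw [uIcc_of_le hc.le] at ht
      rw [hatDensity_of_mem_Icc hk ⟨by linarith [ht.1], ht.2⟩, abs_of_nonneg ht.1]
      ring
  have hsymm : ∫ t in (-c)..0, hatDensity k t = ∫ t in 0..c, hatDensity k t := by
    simpa only [hatDensity_neg, neg_zero] using
      (intervalIntegral.integral_comp_neg (a := 0) (b := c) (hatDensity k)).symm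
  rw [← setIntegral_eq_integral_of_forall_compl_eq_zero (s := Icc (-c) c)
    (fun t ht => hatDensity_of_notMem_Icc hk ht), integral_Icc_eq_integral_Ioc,
    ← intervalIntegral.integral_of_le (by linarith),
    ← intervalIntegral.integral_add_adjacent_intervals (b := 0) (hcont.intervalIntegrable _ _)
      (hcont.intervalIntegrable _ _), hsymm, hhalf]
  norm_num

end HatDensity

theorem abs_integral_hatDensity_mul_log_sub_le {k : ℕ} (hk : 1 ≤ k) {x₀ a R : ℝ} (ha : 0 < a)
    (hrange : ∀ y ∈ closedBall x₀ (2 / k), a ≤ y ∧ y ≤ R) :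
    |(∫ t, hatDensity k t * (log |x₀ + t| * (1 - |x₀ + t| / R))) - log x₀ * (1 - x₀ / R)|
      ≤ ((a ^ 2)⁻¹ + 2 * (a * R)⁻¹) * (2 / k) ^ 2 := by
  have hball : ∀ t ∈ Icc (-(2 / k : ℝ)) (2 / k), x₀ + t ∈ closedBall x₀ (2 / k) := fun t ht => by
    rwa [mem_closedBall, Real.dist_eq, add_sub_cancel_left, abs_le]
  have hpos : ∀ t ∈ Icc (-(2 / k : ℝ)) (2 / k), 0 < x₀ + t := fun t ht =>
    ha.trans_le (hrange _ (hball t ht)).1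
  have hx₀ : 0 < x₀ := ha.trans_le (hrange x₀ (mem_closedBall_self (by positivity))).1
  have hF_cont : ContinuousOn (fun t => log |x₀ + t| * (1 - |x₀ + t| / R))
      (Icc (-(2 / k : ℝ)) (2 / k)) :=
    ((continuous_const.add continuous_id).abs.continuousOn.log
      fun t ht => (abs_pos.mpr (hpos t ht).ne').ne').mul (by fun_prop)
  have htaylor : ∀ t ∈ Icc (-(2 / k : ℝ)) (2 / k),
      |log |x₀ + t| * (1 - |x₀ + t| / R) - log |x₀ + 0| * (1 - |x₀ + 0| / R)
        - (x₀⁻¹ * (1 - x₀ / R) - log x₀ / R) * t|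
        ≤ ((a ^ 2)⁻¹ + 2 * (a * R)⁻¹) * (2 / k) ^ 2 := by
    intro t ht
    rw [add_zero, abs_of_pos hx₀, abs_of_pos (hpos t ht)]
    simpa only [add_sub_cancel_left] using abs_log_mul_one_sub_div_sub_le ha hrange (hball t ht)
  simpa only [add_zero, abs_of_pos hx₀] using
    abs_integral_mul_sub_le (continuous_hatDensity k) (hatDensity_nonneg k)
      (fun t => hatDensity_of_notMem_Icc hk) (integral_hatDensity hk)
      (integral_hatDensity_mul_id k) hF_cont htaylor

/-- for the hat density `ψ_k`, any integer `m ≥ 1`, `R > 2m` and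
`k ≥ 3`,
`|∫ ψ_k(t) log|m+t| (1 - |m+t|/R) dt - log(m)(1 - m/R)| ≤ C k⁻²(m⁻² + (mR)⁻¹)`
for a universal constant `C`. -/
theorem hat_density_log_estimate :
    ∃ C : ℝ, 0 < C ∧ ∀ (k m : ℕ) (R : ℝ), 3 ≤ k → 1 ≤ m → 2 * (m : ℝ) < R →
      |(∫ t, hatDensity k t * (Real.log |(m : ℝ) + t| * (1 - |(m : ℝ) + t| / R)))
          - Real.log m * (1 - (m : ℝ) / R)|
        ≤ C * ((k : ℝ) ^ 2)⁻¹ * (((m : ℝ) ^ 2)⁻¹ + ((m : ℝ) * R)⁻¹) := by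
  refine ⟨36, by norm_num, fun k m R hk hm hR => ?_⟩
  have hk3 : (3 : ℝ) ≤ k := by exact_mod_cast hk
  have hm1 : (1 : ℝ) ≤ m := by exact_mod_cast hm
  have hR0 : 0 < R := by linarith
  have hc : (2 / k : ℝ) ≤ 2 / 3 := by gcongr
  have hrange : ∀ y ∈ closedBall (m : ℝ) (2 / k), (m : ℝ) / 3 ≤ y ∧ y ≤ R := fun y hy => by
    rw [mem_closedBall, Real.dist_eq, abs_le] at hy
    constructor <;> linarith
  refine (abs_integral_hatDensity_mul_log_sub_le (by omega) (by positivity) hrange).trans ?_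
  calc ((((m : ℝ) / 3) ^ 2)⁻¹ + 2 * ((m / 3) * R)⁻¹) * (2 / k) ^ 2
      = 4 * ((k : ℝ) ^ 2)⁻¹ * (9 * ((m : ℝ) ^ 2)⁻¹ + 6 * ((m : ℝ) * R)⁻¹) := by
        field_simp; ring
    _ ≤ 4 * ((k : ℝ) ^ 2)⁻¹ * (9 * ((m : ℝ) ^ 2)⁻¹ + 9 * ((m : ℝ) * R)⁻¹) := by
        gcongr; norm_num
    _ = 36 * ((k : ℝ) ^ 2)⁻¹ * (((m : ℝ) ^ 2)⁻¹ + ((m : ℝ) * R)⁻¹) := by ring
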